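/- arXiv:1603.02080 — 6 statements merged into one kernel-verified Lean document; each statement's English description precedes it below -/
import Mathlib

section
/- Let s > 0 and f : [0,s] → ℝ be a continuous function with f(0) = 0 and f(s) = (1+ε)·s for some ε > 0. Then there exists r ∈ [0,s) such that for all x ∈ [r,s], f(x) ≥ f(r) + (1+ε)·(x - r). -/
/-- Lemma `bigslope`.
Let `s > 0` and `f : [0,s] → ℝ` be continuous with `f 0 = 0` and `f s = (1+ε)·s` for
some `ε > 0`. Then there exists `r ∈ [0,s)` such that for all `x ∈ [r,s]` we have
`f x ≥ f r + (1+ε)·(x - r)`. -/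
theorem stmt0 (s ε : ℝ) (f : ℝ → ℝ) (hs : 0 < s) (hε : 0 < ε)
    (hf : ContinuousOn f (Set.Icc 0 s)) (h0 : f 0 = 0) (hfs : f s = (1 + ε) * s) :
    ∃ r ∈ Set.Ico (0 : ℝ) s, ∀ x ∈ Set.Icc r s, f r + (1 + ε) * (x - r) ≤ f x := by
  set g : ℝ → ℝ := fun x => f x - (1 + ε) * x with hg
  have hgc : ContinuousOn g (Set.Icc 0 s) :=
    hf.sub ((continuous_const.mul continuous_id).continuousOn)
  obtain ⟨r, hr, hmin⟩ := (isCompact_Icc (a := (0:ℝ)) (b := s)).exists_isMinOn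
    (Set.nonempty_Icc.mpr hs.le) hgc
  have hg0 : g 0 = 0 := by simp [hg, h0]
  have hgs : g s = 0 := by simp [hg, hfs]
  by_cases hrs : r = s
  · refine ⟨0, ⟨le_refl _, hs⟩, ?_⟩
    intro x hx
    have := hmin (Set.mem_Icc.mpr ⟨hx.1, hx.2⟩)
    simp only [hg, Set.mem_setOf_eq] at this
    rw [hrs, hfs] at this
    simp [h0]
    linarith
  · refine ⟨r, ⟨hr.1, lt_of_le_of_ne hr.2 hrs⟩, ?_⟩
    intro x hx
    have := hmin (Set.mem_Icc.mpr ⟨le_trans hr.1 hx.1, hx.2⟩)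
    simp only [hg, Set.mem_setOf_eq] at this
    linarith
end

section
/- Let γ : [0,L] → ℝ² be a continuously differentiable curve parameterized by arc length with tangent indicatrix ϑ : [0,L] → ℝ (i.e., γ'(s) = (cos ϑ(s), sin ϑ(s)) with ϑ continuous). Then γ belongs to the class K⁺ (meaning: for every s ∈ [0,L) there exists H > 0 such that for all h ∈ [0,H], ⟨γ'(s+h) − γ'(s), n(s)⟩ ≤ h, where n(s) = (−γ_y'(s), γ_x'(s))) if and only if for all p ∈ [0,L) and all q ∈ [p,L], ϑ(q) − ϑ(p) ≤ q − p. -/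
/-!
Along the curve, `⟨γ'(s+h) − γ'(s), n(s)⟩ = sin (ϑ(s+h) − ϑ(s))`, so `K⁺` says that locally the
sine of the increment of `ϑ` is at most the increment of arc length. By continuity the increment of
`ϑ` is small, hence at most `arcsin h = h + o(h)`: the right upper Dini derivative of `ϑ` is at most
`1`, which integrates to `ϑ q − ϑ p ≤ q − p`. Conversely, `sin x ≤ x` for `x ≥ 0` and `sin x ≤ 0`
for `−π ≤ x ≤ 0`.
-/

/-- The Euclidean dot product of two points of the plane `ℂ ≅ ℝ²`. -/
def dot (z w : ℂ) : ℝ := z.re * w.re + z.im * w.im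

open Real Set Filter Topology

lemma dot_tangent_sub_normal_eq_sin_sub (α β : ℝ) :
    dot (((cos β : ℂ) + (sin β : ℂ) * Complex.I) - ((cos α : ℂ) + (sin α : ℂ) * Complex.I))
      (Complex.I * ((cos α : ℂ) + (sin α : ℂ) * Complex.I)) = sin (β - α) := by
  simp only [dot, Complex.sub_re, Complex.sub_im, Complex.add_re, Complex.add_im,
    Complex.mul_re, Complex.mul_im, Complex.I_re, Complex.I_im,
    Complex.ofReal_re, Complex.ofReal_im, sin_sub]
  ring

lemma sin_le_of_le_of_nonneg {x h : ℝ} (hπ : -π ≤ x) (hxh : x ≤ h) (hh : 0 ≤ h) :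
    sin x ≤ h := by
  rcases le_total 0 x with hx | hx
  · exact (sin_le hx).trans hxh
  · exact (sin_nonpos_of_nonpos_of_neg_pi_le hx hπ).trans hh

lemma eventually_slope_lt_of_sin_sub_le {f : ℝ → ℝ} {x r : ℝ}
    (hf : ContinuousWithinAt f (Ioi x) x) (hsin : ∀ᶠ z in 𝓝[>] x, sin (f z - f x) ≤ z - x)
    (hr : 1 < r) : ∀ᶠ z in 𝓝[>] x, slope f x z < r := by
  have harcsin : HasDerivAt (fun z => arcsin (z - x)) 1 x := by
    have h0 : HasDerivAt arcsin 1 (x - x) := by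
      simpa using hasDerivAt_arcsin (x := 0) (by norm_num) (by norm_num)
    exact h0.comp_sub_const x x
  have hclose : ∀ᶠ z in 𝓝[>] x, f z - f x ∈ Ioo (-(π / 2)) (π / 2) := by
    have hnhds : Ioo (f x - π / 2) (f x + π / 2) ∈ 𝓝 (f x) :=
      Ioo_mem_nhds (by linarith [pi_pos]) (by linarith [pi_pos])
    filter_upwards [hf.tendsto hnhds] with z hz
    exact ⟨by linarith [hz.1], by linarith [hz.2]⟩
  filter_upwards [hsin, hclose, self_mem_nhdsWithin,
    harcsin.hasDerivWithinAt.limsup_slope_le' (lt_irrefl x) hr] with z hz hzclose hzx hzslope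
  have hpos : 0 < z - x := sub_pos.2 hzx
  have hle : f z - f x ≤ arcsin (z - x) :=
    (le_arcsin_iff_sin_le' ⟨hzclose.1, hzclose.2.le⟩).2 hz
  rw [slope_def_field, div_lt_iff₀ hpos] at hzslope ⊢
  simp only [sub_self, arcsin_zero, sub_zero] at hzslope
  linarith

lemma sub_le_of_locally_sin_sub_le {f : ℝ → ℝ} {a b : ℝ} (hf : ContinuousOn f (Icc a b))
    (hloc : ∀ s ∈ Ico a b, ∃ H > 0, ∀ h ∈ Icc 0 H, s + h ≤ b → sin (f (s + h) - f s) ≤ h)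
    {p q : ℝ} (hp : p ∈ Ico a b) (hq : q ∈ Icc p b) : f q - f p ≤ q - p := by
  have hsub : Icc p q ⊆ Icc a b := Icc_subset_Icc hp.1 hq.2
  suffices ∀ ⦃x⦄, x ∈ Icc p q → f x ≤ f p + (x - p) by
    linarith [this ⟨hq.1, le_rfl⟩]
  refine image_le_of_liminf_slope_right_le_deriv_boundary (hf.mono hsub) (by simp)
    (by fun_prop) (B' := fun _ => 1) (fun x _ => ?_) fun x hx r hr => ?_
  · simpa using ((hasDerivAt_id x).sub_const p).const_add (f p) |>.hasDerivWithinAt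
  have hxb : x < b := hx.2.trans_le hq.2
  obtain ⟨H, hH, hle⟩ := hloc x ⟨hp.1.trans hx.1, hxb⟩
  have hcont : ContinuousWithinAt f (Ioi x) x :=
    (hf x (hsub (Ico_subset_Icc_self hx))).mono_of_mem_nhdsWithin
      (mem_of_superset (Ioc_mem_nhdsGT hxb) (Ioc_subset_Icc_self.trans
        (Icc_subset_Icc_left (hp.1.trans hx.1))))
  refine (eventually_slope_lt_of_sin_sub_le hcont ?_ hr).frequently
  filter_upwards [Ioc_mem_nhdsGT hxb, Ioc_mem_nhdsGT (lt_add_of_pos_right x hH)] with z hzb hzH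
  simpa using hle (z - x) ⟨by linarith [hzb.1], by linarith [hzH.2]⟩ (by linarith [hzb.2])

lemma locally_sin_sub_le_of_sub_le {f : ℝ → ℝ} {b s : ℝ}
    (hf : ContinuousWithinAt f (Icc s b) s) (hlip : ∀ q ∈ Icc s b, f q - f s ≤ q - s) :
    ∃ H > 0, ∀ h ∈ Icc 0 H, s + h ≤ b → sin (f (s + h) - f s) ≤ h := by
  obtain ⟨δ, hδ, hclose⟩ := Metric.continuousWithinAt_iff.1 hf π pi_pos
  refine ⟨δ / 2, half_pos hδ, fun h hh hsh => ?_⟩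
  have hmem : s + h ∈ Icc s b := ⟨le_add_of_nonneg_right hh.1, hsh⟩
  have hdist : dist (f (s + h)) (f s) < π :=
    hclose hmem (by rw [dist_eq, add_sub_cancel_left, abs_of_nonneg hh.1]; linarith [hh.2])
  refine sin_le_of_le_of_nonneg ?_ (by linarith [hlip _ hmem]) hh.1
  linarith [neg_abs_le (f (s + h) - f s), dist_eq (f (s + h)) (f s)]

theorem locally_sin_sub_le_iff {f : ℝ → ℝ} {a b : ℝ} (hf : ContinuousOn f (Icc a b)) :
    (∀ s ∈ Ico a b, ∃ H > 0, ∀ h ∈ Icc 0 H, s + h ≤ b → sin (f (s + h) - f s) ≤ h) ↔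
      ∀ p ∈ Ico a b, ∀ q ∈ Icc p b, f q - f p ≤ q - p :=
  ⟨fun hloc _ hp _ hq => sub_le_of_locally_sin_sub_le hf hloc hp hq,
    fun hlip s hs => locally_sin_sub_le_of_sub_le
      ((hf s (Ico_subset_Icc_self hs)).mono (Icc_subset_Icc_left hs.1)) (hlip s hs)⟩

theorem stmt3_general (L : ℝ) (γ : ℝ → ℂ) (ϑ : ℝ → ℝ)
    (hϑc : ContinuousOn ϑ (Set.Icc 0 L))
    (hderiv : ∀ s ∈ Set.Icc (0 : ℝ) L,
      HasDerivAt γ ((Real.cos (ϑ s) : ℝ) + (Real.sin (ϑ s) : ℝ) * Complex.I) s) :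
    ((∀ s ∈ Set.Ico (0 : ℝ) L, ∃ H > (0 : ℝ), ∀ h ∈ Set.Icc (0 : ℝ) H, s + h ≤ L →
        dot (deriv γ (s + h) - deriv γ s) (Complex.I * deriv γ s) ≤ h)
      ↔ (∀ p ∈ Set.Ico (0 : ℝ) L, ∀ q ∈ Set.Icc p L, ϑ q - ϑ p ≤ q - p)) := by
  rw [← locally_sin_sub_le_iff hϑc]
  refine forall₂_congr fun s hs => exists_congr fun H => and_congr_right fun _ =>
    forall₂_congr fun h hh => imp_congr_right fun hsh => ?_
  rw [(hderiv s (Ico_subset_Icc_self hs)).deriv,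
    (hderiv (s + h) ⟨add_nonneg hs.1 hh.1, hsh⟩).deriv, dot_tangent_sub_normal_eq_sin_sub]

/-- Lemma `slowvv`.
Let `γ : [0,L] → ℝ²` be a continuously differentiable unit-speed curve with tangent
indicatrix `ϑ` (i.e. `γ'(s) = (cos ϑ(s), sin ϑ(s))`, `ϑ` continuous). Then `γ ∈ K⁺`
(for every `s ∈ [0,L)` there is `H > 0` with `⟨γ'(s+h) − γ'(s), n(s)⟩ ≤ h` for all
`h ∈ [0,H]` with `s + h ≤ L`, where `n(s) = I·γ'(s)` is the left unit normal) iff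
`ϑ(q) − ϑ(p) ≤ q − p` for all `p ∈ [0,L)` and `q ∈ [p,L]`. -/
theorem stmt3 (L : ℝ) (hL : 0 < L) (γ : ℝ → ℂ) (ϑ : ℝ → ℝ)
    (hϑc : ContinuousOn ϑ (Set.Icc 0 L))
    (hderiv : ∀ s ∈ Set.Icc (0 : ℝ) L,
      HasDerivAt γ ((Real.cos (ϑ s) : ℝ) + (Real.sin (ϑ s) : ℝ) * Complex.I) s) :
    ((∀ s ∈ Set.Ico (0 : ℝ) L, ∃ H > (0 : ℝ), ∀ h ∈ Set.Icc (0 : ℝ) H, s + h ≤ L →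
        dot (deriv γ (s + h) - deriv γ s) (Complex.I * deriv γ s) ≤ h)
      ↔ (∀ p ∈ Set.Ico (0 : ℝ) L, ∀ q ∈ Set.Icc p L, ϑ q - ϑ p ≤ q - p)) :=
  stmt3_general L γ ϑ hϑc hderiv
end

section
/- Let γ : [0,L] → ℝ² be continuously differentiable, parameterized by arc length, with continuous tangent indicatrix ϑ satisfying ϑ(q) − ϑ(p) ≤ q − p for all 0 ≤ p ≤ q ≤ L. Fix s ∈ [0,L) and let D be the open unit disk with center γ(s) + n(s), where n(s) = (−γ_y'(s), γ_x'(s)). Then there exists h > 0 such that γ([s, s+h] ∩ [0,L]) is disjoint from D. -/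
/-!
Compare `γ` with the unit-speed unit circle `σ` that leaves `γ s` in the direction `γ' s`
turning left; its center is the center of `D`. Put `β = ϑ s + (t - s)`, so that
`ν = -I e^{iβ}` is the outward normal of `σ` at time `t`. As `Re (conj ν · e^{iθ}) = sin (β - θ)`
and `ϑ u ≤ ϑ s + (u - s)`, the derivative of `Re (conj ν · (γ - σ))` is nonnegative as long as
all angles involved stay in `[-π/2, π/2]`, which continuity of `ϑ` guarantees for `t` near `s`.
Hence `Re (conj ν · (γ t - σ t)) ≥ 0`, i.e. `γ t` lies on the far side of the tangent line to
the circle at `σ t`, outside `D`.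
-/

open Complex Set

noncomputable def unitCircleArc (z : ℂ) (θ u : ℝ) : ℂ :=
  z + I * exp (θ * I) - I * exp ((θ + u) * I)

lemma hasDerivAt_unitCircleArc (z : ℂ) (θ u : ℝ) :
    HasDerivAt (unitCircleArc z θ) (exp ((θ + u) * I)) u := by
  have h := (((hasDerivAt_id (u : ℂ)).const_add (θ : ℂ)).mul_const I).cexp.const_mul I
  refine ((h.comp_ofReal).const_sub (z + I * exp (θ * I))).congr_deriv ?_
  simp only [id]
  linear_combination -exp ((θ + u) * I) * I_mul_I

lemma re_I_mul_exp_neg_mul_exp (β θ : ℝ) :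
    (I * exp (-β * I) * exp (θ * I)).re = Real.sin (β - θ) := by
  rw [mul_assoc, ← Complex.exp_add, show -β * I + θ * I = ((θ - β : ℝ) : ℂ) * I by push_cast; ring,
    I_mul_re, exp_ofReal_mul_I_im, ← Real.sin_neg, neg_sub]

lemma HasDerivAt.re_const_mul {f : ℝ → ℂ} {f' : ℂ} {x : ℝ} (w : ℂ) (hf : HasDerivAt f f' x) :
    HasDerivAt (fun u => (w * f u).re) (w * f').re x :=
  reCLM.hasFDerivAt.comp_hasDerivAt x (hf.const_mul w)

theorem one_le_norm_sub_of_angle_le {γ : ℝ → ℂ} {ϑ : ℝ → ℝ} {s t : ℝ} (hst : s ≤ t)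
    (hγ : ∀ u ∈ Icc s t, HasDerivAt γ (exp (ϑ u * I)) u)
    (hup : ∀ u ∈ Icc s t, ϑ u - ϑ s ≤ u - s)
    (hlow : ∀ u ∈ Icc s t, ϑ s - ϑ u ≤ Real.pi / 2 - (t - s)) :
    1 ≤ ‖γ t - (γ s + I * exp (ϑ s * I))‖ := by
  set β := ϑ s + (t - s)
  set w := I * exp (-β * I)
  set σ := fun u => unitCircleArc (γ s) (ϑ s) (u - s)
  have hσ (u : ℝ) : HasDerivAt σ (exp ((ϑ s + (u - s) : ℝ) * I)) u := by
    simpa using (hasDerivAt_unitCircleArc (γ s) (ϑ s) (u - s)).comp_sub_const u s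
  have hsin : ∀ u ∈ Icc s t, Real.sin (β - (ϑ s + (u - s))) ≤ Real.sin (β - ϑ u) := by
    rintro u ⟨hsu, hut⟩
    have hturn := hup u ⟨hsu, hut⟩
    have hdrop := hlow u ⟨hsu, hut⟩
    have hshort : 0 ≤ Real.pi / 2 - (t - s) := by simpa using hlow s (left_mem_Icc.2 hst)
    have := Real.pi_pos
    simp only [β]
    exact Real.strictMonoOn_sin.monotoneOn ⟨by linarith, by linarith⟩ ⟨by linarith, by linarith⟩
      (by linarith)
  have hmono : MonotoneOn (fun u => (w * (γ u - σ u)).re) (Icc s t) := by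
    have hd : ∀ u ∈ Icc s t, HasDerivAt (fun u => (w * (γ u - σ u)).re)
        (Real.sin (β - ϑ u) - Real.sin (β - (ϑ s + (u - s)))) u := by
      intro u hu
      refine (((hγ u hu).sub (hσ u)).re_const_mul w).congr_deriv ?_
      rw [mul_sub, sub_re, re_I_mul_exp_neg_mul_exp, re_I_mul_exp_neg_mul_exp]
    refine monotoneOn_of_hasDerivWithinAt_nonneg (convex_Icc s t)
      (fun u hu => (hd u hu).continuousAt.continuousWithinAt)
      (fun u hu => (hd u (interior_subset hu)).hasDerivWithinAt)
      (fun u hu => sub_nonneg.2 (hsin u (interior_subset hu)))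
  have hstart : σ s = γ s := by simp [σ, unitCircleArc]
  have hcenter : γ t - (γ s + I * exp (ϑ s * I)) = (γ t - σ t) - I * exp (β * I) := by
    simp only [σ, unitCircleArc, β]; push_cast; ring_nf
  have hw : w * (-(I * exp (β * I))) = 1 := by
    rw [show w * (-(I * exp (β * I))) = -(I * I) * exp (-β * I + β * I) by
      rw [Complex.exp_add]; ring, I_mul_I]
    simp
  calc (1 : ℝ) ≤ (w * (γ t - σ t)).re + 1 := by
        simpa [hstart] using hmono (left_mem_Icc.2 hst) (right_mem_Icc.2 hst) hst
    _ = (w * (γ t - (γ s + I * exp (ϑ s * I)))).re := by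
        rw [hcenter, sub_eq_add_neg _ (I * _), mul_add, hw, add_re, one_re]
    _ ≤ ‖w * (γ t - (γ s + I * exp (ϑ s * I)))‖ := re_le_norm _
    _ = ‖γ t - (γ s + I * exp (ϑ s * I))‖ := by
        rw [norm_mul, norm_mul, norm_I, ← ofReal_neg, norm_exp_ofReal_mul_I, one_mul, one_mul]

theorem stmt4_general (L : ℝ) (γ : ℝ → ℂ) (ϑ : ℝ → ℝ)
    (hϑc : ContinuousOn ϑ (Set.Icc 0 L))
    (hderiv : ∀ t ∈ Set.Icc (0 : ℝ) L,
      HasDerivAt γ ((Real.cos (ϑ t) : ℝ) + (Real.sin (ϑ t) : ℝ) * Complex.I) t)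
    (hK : ∀ p ∈ Set.Icc (0 : ℝ) L, ∀ q ∈ Set.Icc p L, ϑ q - ϑ p ≤ q - p)
    (s : ℝ) (hs : s ∈ Set.Ico (0 : ℝ) L) :
    ∃ h > (0 : ℝ), ∀ t ∈ Set.Icc s (s + h) ∩ Set.Icc (0 : ℝ) L,
      γ t ∉ Metric.ball (γ s + Complex.I * deriv γ s) 1 := by
  have hs0L : s ∈ Icc 0 L := Ico_subset_Icc_self hs
  have hγ : ∀ u ∈ Icc 0 L, HasDerivAt γ (exp (ϑ u * I)) u := fun u hu => by
    simpa only [exp_mul_I, ← ofReal_cos, ← ofReal_sin] using hderiv u hu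
  obtain ⟨δ, hδ, hϑδ⟩ :=
    Metric.continuousWithinAt_iff.mp (hϑc s hs0L) (Real.pi / 4) (by positivity)
  refine ⟨min (δ / 2) (Real.pi / 4), by positivity, ?_⟩
  rintro t ⟨⟨hst, hth⟩, -, htL⟩
  have hsub : Icc s t ⊆ Icc 0 L := Icc_subset_Icc hs.1 htL
  have hclose (u : ℝ) (hu : u ∈ Icc s t) : ϑ s - ϑ u < Real.pi / 4 := by
    have hdist : dist u s < δ := by
      rw [Real.dist_eq, abs_of_nonneg (sub_nonneg.2 hu.1)]
      linarith [hu.2, min_le_left (δ / 2) (Real.pi / 4)]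
    have := hϑδ (hsub hu) hdist
    rw [Real.dist_eq] at this
    linarith [neg_abs_le (ϑ u - ϑ s)]
  rw [(hγ s hs0L).deriv, Metric.mem_ball, dist_eq, not_lt]
  refine one_le_norm_sub_of_angle_le hst (fun u hu => hγ u (hsub hu))
    (fun u hu => hK s hs0L u ⟨hu.1, (hsub hu).2⟩) (fun u hu => ?_)
  linarith [hclose u hu, min_le_right (δ / 2) (Real.pi / 4)]

/-- Lemma `localdisjoint`.
Let `γ : [0,L] → ℝ² ≅ ℂ` be continuously differentiable, unit speed, with continuous
tangent indicatrix `ϑ` satisfying `ϑ(q) − ϑ(p) ≤ q − p` for `0 ≤ p ≤ q ≤ L` (class `K⁺`).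
Fix `s ∈ [0,L)` and let `D` be the open unit disk centered at `γ(s) + n(s)`, where
`n(s) = (−γ_y'(s), γ_x'(s)) = I·γ'(s)` is the left unit normal. Then there exists
`h > 0` such that `γ([s,s+h] ∩ [0,L])` is disjoint from `D`. -/
theorem stmt4 (L : ℝ) (hL : 0 ≤ L) (γ : ℝ → ℂ) (ϑ : ℝ → ℝ)
    (hϑc : ContinuousOn ϑ (Set.Icc 0 L))
    (hderiv : ∀ t ∈ Set.Icc (0 : ℝ) L,
      HasDerivAt γ ((Real.cos (ϑ t) : ℝ) + (Real.sin (ϑ t) : ℝ) * Complex.I) t)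
    (hK : ∀ p ∈ Set.Icc (0 : ℝ) L, ∀ q ∈ Set.Icc p L, ϑ q - ϑ p ≤ q - p)
    (s : ℝ) (hs : s ∈ Set.Ico (0 : ℝ) L) :
    ∃ h > (0 : ℝ), ∀ t ∈ Set.Icc s (s + h) ∩ Set.Icc (0 : ℝ) L,
      γ t ∉ Metric.ball (γ s + Complex.I * deriv γ s) 1 :=
  stmt4_general L γ ϑ hϑc hderiv hK s hs
end

section
/- Let γ : [0,L] → ℝ² be a unit-speed curve with γ(0) = (0,−1), γ'(0) = (1,0), and continuous tangent indicatrix ϑ with ϑ(0) = 0 and ϑ(x) ≤ x for all x ∈ [0,L]. Choose h ∈ (0, π/4] such that ϑ([0,h]) ⊆ [−π/4, π/4]. Then for every s ∈ [0,h]: (i) cos s + sin s ≤ γ_x(s) − γ_y(s), and (ii) γ_y(s) ≤ −cos s. -/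
/-! Both coordinates of `γ` are integrals of a function of `ϑ`: `γ_y = -1 + ∫ sin ϑ` and
`γ_x - γ_y = 1 + ∫ (cos ϑ - sin ϑ)`. On `[-π/4, π/4]` the function `sin` is increasing and
`cos - sin = √2 cos (· + π/4)` is decreasing, so `ϑ(x) ≤ x` lets us replace `ϑ` by the identity,
i.e. compare with the unit circle `s ↦ (sin s, -cos s)`, whose integrals are explicit. -/

open Real Set

theorem cos_sub_sin_eq_sqrt_two_mul_cos (t : ℝ) : cos t - sin t = √2 * cos (t + π / 4) := by
  have h2 : √2 * √2 = 2 := Real.mul_self_sqrt zero_le_two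
  rw [cos_add, cos_pi_div_four, sin_pi_div_four]
  linear_combination -(cos t - sin t) * h2 / 2

theorem antitoneOn_cos_sub_sin :
    AntitoneOn (fun t => cos t - sin t) (Icc (-(π / 4)) (3 * π / 4)) := by
  intro a ha b hb hab
  simp only [cos_sub_sin_eq_sqrt_two_mul_cos]
  gcongr
  exact antitoneOn_cos ⟨by linarith [ha.1], by linarith [hb.2]⟩
    ⟨by linarith [ha.1], by linarith [hb.2]⟩ (by linarith)

theorem intervalIntegral_comp_le_of_monotoneOn {f ϑ : ℝ → ℝ} {a b : ℝ} {I : Set ℝ}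
    (hab : a ≤ b) (hf : Continuous f) (hfI : MonotoneOn f I) (hϑ : ContinuousOn ϑ (Icc a b))
    (hϑI : ∀ x ∈ Icc a b, ϑ x ∈ I) (hI : Icc a b ⊆ I) (hϑle : ∀ x ∈ Icc a b, ϑ x ≤ x) :
    ∫ x in a..b, f (ϑ x) ≤ ∫ x in a..b, f x := by
  have hϑ' : ContinuousOn ϑ (uIcc a b) := by rwa [uIcc_of_le hab]
  exact intervalIntegral.integral_mono_on hab (hf.comp_continuousOn hϑ').intervalIntegrable
    (hf.intervalIntegrable a b) fun x hx => hfI (hϑI x hx) (hI hx) (hϑle x hx)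

theorem intervalIntegral_le_comp_of_antitoneOn {f ϑ : ℝ → ℝ} {a b : ℝ} {I : Set ℝ}
    (hab : a ≤ b) (hf : Continuous f) (hfI : AntitoneOn f I) (hϑ : ContinuousOn ϑ (Icc a b))
    (hϑI : ∀ x ∈ Icc a b, ϑ x ∈ I) (hI : Icc a b ⊆ I) (hϑle : ∀ x ∈ Icc a b, ϑ x ≤ x) :
    ∫ x in a..b, f x ≤ ∫ x in a..b, f (ϑ x) := by
  have := intervalIntegral_comp_le_of_monotoneOn hab hf.neg hfI.neg hϑ hϑI hI hϑle
  simpa only [Pi.neg_apply, intervalIntegral.integral_neg, neg_le_neg_iff] using this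

section ComparisonWithCircle

variable {ϑ : ℝ → ℝ} {s : ℝ}

theorem integral_sin_comp_le_one_sub_cos (hs : 0 ≤ s) (hsπ : s ≤ π / 2)
    (hϑ : ContinuousOn ϑ (Icc 0 s)) (hϑI : ∀ x ∈ Icc 0 s, ϑ x ∈ Icc (-(π / 2)) x) :
    ∫ x in (0 : ℝ)..s, sin (ϑ x) ≤ 1 - cos s := by
  have := intervalIntegral_comp_le_of_monotoneOn hs continuous_sin strictMonoOn_sin.monotoneOn
    hϑ (fun x hx => ⟨(hϑI x hx).1, (hϑI x hx).2.trans (hx.2.trans hsπ)⟩)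
    (Icc_subset_Icc (by linarith [pi_pos]) hsπ) fun x hx => (hϑI x hx).2
  rwa [integral_sin, cos_zero] at this

theorem sin_add_cos_sub_one_le_integral_cos_sub_integral_sin (hs : 0 ≤ s)
    (hsπ : s ≤ 3 * π / 4) (hϑ : ContinuousOn ϑ (Icc 0 s))
    (hϑI : ∀ x ∈ Icc 0 s, ϑ x ∈ Icc (-(π / 4)) x) :
    sin s + cos s - 1 ≤ (∫ x in (0 : ℝ)..s, cos (ϑ x)) - ∫ x in (0 : ℝ)..s, sin (ϑ x) := by
  have := intervalIntegral_le_comp_of_antitoneOn (f := fun t => cos t - sin t) hs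
    (continuous_cos.sub continuous_sin) antitoneOn_cos_sub_sin hϑ
    (fun x hx => ⟨(hϑI x hx).1, (hϑI x hx).2.trans (hx.2.trans hsπ)⟩)
    (Icc_subset_Icc (by linarith [pi_pos]) hsπ) fun x hx => (hϑI x hx).2
  have hϑ' : ContinuousOn ϑ (uIcc 0 s) := by rwa [uIcc_of_le hs]
  rw [intervalIntegral.integral_sub (f := fun x => cos (ϑ x)) (g := fun x => sin (ϑ x))
      (continuous_cos.comp_continuousOn hϑ').intervalIntegrable
      (continuous_sin.comp_continuousOn hϑ').intervalIntegrable,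
    intervalIntegral.integral_sub (continuous_cos.intervalIntegrable 0 s)
      (continuous_sin.intervalIntegrable 0 s), integral_cos, integral_sin, sin_zero,
    cos_zero] at this
  linarith

end ComparisonWithCircle

theorem stmt5_general (L : ℝ) (γ : ℝ → ℂ) (ϑ : ℝ → ℝ)
    (hϑc : ContinuousOn ϑ (Set.Icc 0 L))
    (hγ0 : γ 0 = -Complex.I)
    (hϑle : ∀ x ∈ Set.Icc (0 : ℝ) L, ϑ x ≤ x)
    (hγ : ∀ s ∈ Set.Icc (0 : ℝ) L, γ s = γ 0 +
      ((∫ x in (0 : ℝ)..s, Real.cos (ϑ x) : ℝ) +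
        (∫ x in (0 : ℝ)..s, Real.sin (ϑ x) : ℝ) * Complex.I))
    (h : ℝ) (hh : h ∈ Set.Ioc (0 : ℝ) (Real.pi / 4)) (hhL : h ≤ L)
    (hrange : ∀ x ∈ Set.Icc (0 : ℝ) h, ϑ x ∈ Set.Icc (-(Real.pi / 4)) (Real.pi / 4))
    (s : ℝ) (hs : s ∈ Set.Icc (0 : ℝ) h) :
    Real.cos s + Real.sin s ≤ (γ s).re - (γ s).im ∧ (γ s).im ≤ -Real.cos s := by
  have hsL : Icc 0 s ⊆ Icc 0 L := Icc_subset_Icc le_rfl (hs.2.trans hhL)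
  have hsπ : s ≤ π / 4 := hs.2.trans hh.2
  have hϑ : ContinuousOn ϑ (Icc 0 s) := hϑc.mono hsL
  have hϑI : ∀ x ∈ Icc 0 s, ϑ x ∈ Icc (-(π / 4)) x := fun x hx =>
    ⟨(hrange x ⟨hx.1, hx.2.trans hs.2⟩).1, hϑle x (hsL hx)⟩
  have hsin := integral_sin_comp_le_one_sub_cos hs.1 (by linarith [pi_pos]) hϑ fun x hx =>
    ⟨by linarith [(hϑI x hx).1, pi_pos], (hϑI x hx).2⟩
  have hcos_sub_sin := sin_add_cos_sub_one_le_integral_cos_sub_integral_sin hs.1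
    (by linarith [pi_pos]) hϑ hϑI
  have hγs := hγ s (hsL ⟨hs.1, le_rfl⟩)
  have hre : (γ s).re = ∫ x in (0 : ℝ)..s, cos (ϑ x) := by simp [hγs, hγ0]
  have him : (γ s).im = -1 + ∫ x in (0 : ℝ)..s, sin (ϑ x) := by simp [hγs, hγ0]
  constructor <;> linarith

/-- Let `γ : [0,L] → ℝ² ≅ ℂ` be a unit-speed curve with `γ(0) = (0,−1)`, `γ'(0) = (1,0)`,
and continuous tangent indicatrix `ϑ` with `ϑ(0) = 0` and `ϑ(x) ≤ x` on `[0,L]`, where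
`γ(s) = γ(0) + (∫₀ˢ cos ϑ, ∫₀ˢ sin ϑ)`. Choose `h ∈ (0, π/4]` with
`ϑ([0,h]) ⊆ [−π/4, π/4]`. Then for every `s ∈ [0,h]`:
(i) `cos s + sin s ≤ γ_x(s) − γ_y(s)`, and (ii) `γ_y(s) ≤ −cos s`. -/
theorem stmt5 (L : ℝ) (γ : ℝ → ℂ) (ϑ : ℝ → ℝ)
    (hϑc : ContinuousOn ϑ (Set.Icc 0 L))
    (hγ0 : γ 0 = -Complex.I)
    (hϑ0 : ϑ 0 = 0)
    (hϑle : ∀ x ∈ Set.Icc (0 : ℝ) L, ϑ x ≤ x)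
    (hγ : ∀ s ∈ Set.Icc (0 : ℝ) L, γ s = γ 0 +
      ((∫ x in (0 : ℝ)..s, Real.cos (ϑ x) : ℝ) +
        (∫ x in (0 : ℝ)..s, Real.sin (ϑ x) : ℝ) * Complex.I))
    (h : ℝ) (hh : h ∈ Set.Ioc (0 : ℝ) (Real.pi / 4)) (hhL : h ≤ L)
    (hrange : ∀ x ∈ Set.Icc (0 : ℝ) h, ϑ x ∈ Set.Icc (-(Real.pi / 4)) (Real.pi / 4))
    (s : ℝ) (hs : s ∈ Set.Icc (0 : ℝ) h) :
    Real.cos s + Real.sin s ≤ (γ s).re - (γ s).im ∧ (γ s).im ≤ -Real.cos s :=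
  stmt5_general L γ ϑ hϑc hγ0 hϑle hγ h hh hhL hrange s hs
end

section
/- Let C be a circle and A a circular arc (or line segment) in the plane, and let x be a point. There exists at most one circle with center x that osculates A, where a circle C with center x osculates A at a ∈ A if the open disk bounded by C is disjoint from A, a ∈ C ∩ A, and x = a + c·n_A(a) for some c ≥ 0 (n_A(a) the left unit normal of A at a). If such an osculating circle C exists, its radius equals dist(x, A), it osculates A at the point of A closest to x, and if A is a convex arc then the radius of C is at most the radius of A. -/
/-- The circle with center `x` and radius `ρ` *osculates* the set `A` (an oriented arc
or segment with left unit normal field `nA`) at the point `a` if the open disk it bounds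
is disjoint from `A`, `a` lies on both the circle and `A`, and the center `x` lies on
the ray from `a` in the direction `nA a`. -/
def Osculates (A : Set ℂ) (nA : ℂ → ℂ) (x a : ℂ) (ρ : ℝ) : Prop :=
  Metric.ball x ρ ∩ A = ∅ ∧ a ∈ A ∧ dist x a = ρ ∧ ∃ c : ℝ, 0 ≤ c ∧ x = a + c • nA a

/-!
An osculating circle centered at `x` has no point of `A` inside it but touches `A`, so its
radius is `dist(x, A)` and it touches `A` at a closest point; in particular it is unique.
For an arc of the circle `S(o, rA)` with inward normal, the center of an osculating circle
of radius `ρ` touching at `a` is `x = a + (ρ / rA) (o - a)`. If `ρ > rA`, then `x` lies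
beyond `o`, and by strict convexity of the norm `a` is the unique farthest point of the
circle `S(o, rA)` from `x`; every other point of the arc is then strictly inside the
osculating circle.
-/

open Metric Set

section StrictConvex

variable {E : Type*} [NormedAddCommGroup E] [NormedSpace ℝ E] [StrictConvexSpace ℝ E]

theorem dist_lt_dist_of_mem_sphere_of_one_lt {o a p : E} {r s : ℝ} (ha : a ∈ sphere o r)
    (hp : p ∈ sphere o r) (hpa : p ≠ a) (hs : 1 < s) :
    dist (a + s • (o - a)) p < dist (a + s • (o - a)) a := by
  rw [mem_sphere', dist_eq_norm] at ha hp
  have hxo : a + s • (o - a) - o = (s - 1) • (o - a) := by module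
  have hsr : ¬SameRay ℝ ((s - 1) • (o - a)) (o - p) := fun h ↦ by
    have h' := h.pos_smul_left (inv_pos.2 (sub_pos.2 hs))
    rw [inv_smul_smul₀ (sub_pos.2 hs).ne'] at h'
    exact hpa (sub_right_injective (h'.eq_of_norm_eq (ha.trans hp.symm))).symm
  calc dist (a + s • (o - a)) p = ‖(s - 1) • (o - a) + (o - p)‖ := by
        rw [dist_eq_norm, ← hxo]; congr 1; abel
    _ < ‖(s - 1) • (o - a)‖ + ‖o - p‖ := norm_add_lt_of_not_sameRay hsr
    _ = dist (a + s • (o - a)) a := by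
        rw [dist_eq_norm, add_sub_cancel_left, norm_smul, norm_smul, hp, ha,
          Real.norm_of_nonneg, Real.norm_of_nonneg] <;> linarith

end StrictConvex

theorem nontrivial_image_circleMap_Icc (c : ℂ) {R θ₁ θ₂ : ℝ} (hR : R ≠ 0) (hθ : θ₁ < θ₂) :
    (circleMap c R '' Icc θ₁ θ₂).Nontrivial := by
  set θ := min θ₂ (θ₁ + Real.pi)
  have hθ₁ : θ₁ < θ := lt_min hθ (by linarith [Real.pi_pos])
  refine ⟨_, mem_image_of_mem _ ⟨le_rfl, hθ.le⟩, _,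
    mem_image_of_mem _ ⟨hθ₁.le, min_le_left _ _⟩, fun h ↦ hθ₁.ne (eq_of_circleMap_eq hR ?_ h)⟩
  rw [abs_lt]
  constructor <;> linarith [min_le_right θ₂ (θ₁ + Real.pi), Real.pi_pos]

namespace Osculates

variable {A : Set ℂ} {nA : ℂ → ℂ} {x a : ℂ} {ρ : ℝ}

theorem le_dist (h : Osculates A nA x a ρ) {b : ℂ} (hb : b ∈ A) : ρ ≤ dist x b :=
  not_lt.1 fun hlt ↦ eq_empty_iff_forall_notMem.1 h.1 b ⟨mem_ball'.2 hlt, hb⟩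

theorem dist_le (h : Osculates A nA x a ρ) {b : ℂ} (hb : b ∈ A) : dist x a ≤ dist x b :=
  h.2.2.1 ▸ h.le_dist hb

theorem eq_infDist (h : Osculates A nA x a ρ) : ρ = infDist x A :=
  le_antisymm ((le_infDist ⟨a, h.2.1⟩).2 fun _ ↦ h.le_dist)
    (h.2.2.1 ▸ infDist_le_dist_of_mem h.2.1)

theorem le_radius_of_eq_image_circleMap {o : ℂ} {rA θ₁ θ₂ : ℝ} (h : Osculates A nA x a ρ)
    (hrA : 0 < rA) (hθ : θ₁ < θ₂) (hA : A = circleMap o rA '' Icc θ₁ θ₂)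
    (hnA : nA a = rA⁻¹ • (o - a)) : ρ ≤ rA := by
  have hgap : ∀ b ∈ A, ρ ≤ dist x b := fun _ ↦ h.le_dist
  obtain ⟨-, haA, hρ, c, hc, hx⟩ := h
  have hsphere : A ⊆ sphere o rA :=
    hA ▸ image_subset_iff.2 fun θ _ ↦ circleMap_mem_sphere o hrA.le θ
  rw [hnA, smul_smul] at hx
  have hρc : ρ = c * rA⁻¹ * rA := by
    rw [← hρ, hx, dist_eq_norm, add_sub_cancel_left, norm_smul, ← mem_sphere_iff_norm.1
      (hsphere haA), norm_sub_rev, Real.norm_of_nonneg (by positivity)]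
  by_contra! hlt
  obtain ⟨p, hpA, hpa⟩ := (hA ▸ nontrivial_image_circleMap_Icc o hrA.ne' hθ).exists_ne a
  have hfar := dist_lt_dist_of_mem_sphere_of_one_lt (hsphere haA) (hsphere hpA) hpa
    (s := c * rA⁻¹) (by nlinarith)
  rw [← hx] at hfar
  linarith [hgap p hpA]

end Osculates

theorem stmt12_general (A : Set ℂ) (nA : ℂ → ℂ) (x : ℂ) :
    (∀ (a a' : ℂ) (ρ ρ' : ℝ),
        Osculates A nA x a ρ → Osculates A nA x a' ρ' → ρ = ρ') ∧
    (∀ (a : ℂ) (ρ : ℝ), Osculates A nA x a ρ →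
        ρ = Metric.infDist x A ∧ ∀ b ∈ A, dist x a ≤ dist x b) ∧
    (∀ (o : ℂ) (rA θ₁ θ₂ : ℝ), 0 < rA → θ₁ < θ₂ →
        A = (fun θ : ℝ => o + (rA : ℂ) * Complex.exp (θ * Complex.I)) '' Set.Icc θ₁ θ₂ →
        (∀ a ∈ A, nA a = rA⁻¹ • (o - a)) →
        ∀ (a : ℂ) (ρ : ℝ), Osculates A nA x a ρ → ρ ≤ rA) :=
  ⟨fun _ _ _ _ h h' ↦ h.eq_infDist.trans h'.eq_infDist.symm,
    fun _ _ h ↦ ⟨h.eq_infDist, fun _ ↦ h.dist_le⟩,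
    fun _ _ _ _ hrA hθ hA hnA a _ h ↦
      h.le_radius_of_eq_image_circleMap hrA hθ hA (hnA a h.2.1)⟩

/-- Observation `oscSmallRadius`.
Let `A` be a (nonempty) circular arc or line segment with left unit normal field `nA`,
and `x` a point.  Then: there is at most one circle centered at `x` osculating `A`
(any two have equal radii, hence coincide); if an osculating circle exists, its radius
equals `dist(x, A)` and it osculates `A` at a point of `A` closest to `x`; and if `A` is
a convex arc — an arc of a circle of radius `rA` centered at `o` whose left normal
`nA a = (o − a)/rA` points toward the center — then the radius of the osculating circle
is at most `rA`. -/
theorem stmt12 (A : Set ℂ) (hA : A.Nonempty) (nA : ℂ → ℂ) (x : ℂ) :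
    (∀ (a a' : ℂ) (ρ ρ' : ℝ),
        Osculates A nA x a ρ → Osculates A nA x a' ρ' → ρ = ρ') ∧
    (∀ (a : ℂ) (ρ : ℝ), Osculates A nA x a ρ →
        ρ = Metric.infDist x A ∧ ∀ b ∈ A, dist x a ≤ dist x b) ∧
    (∀ (o : ℂ) (rA θ₁ θ₂ : ℝ), 0 < rA → θ₁ < θ₂ →
        A = (fun θ : ℝ => o + (rA : ℂ) * Complex.exp (θ * Complex.I)) '' Set.Icc θ₁ θ₂ →
        (∀ a ∈ A, nA a = rA⁻¹ • (o - a)) →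
        ∀ (a : ℂ) (ρ : ℝ), Osculates A nA x a ρ → ρ ≤ rA) :=
  stmt12_general A nA x
end

section
/- Let A be a circular arc of radius ρ < 1 spanning an angle less than π, with endpoints a and b, convex (turning left) with respect to its orientation from a to b. Let C be the arc of radius 1 from a to b, on the same side as A, spanning an angle less than π. Let S be the closed region bounded by A and C, and let U be the closed unit disk whose boundary contains C. Then the only open unit disk contained in S ∪ U is the interior of U. -/
open Metric Complex Filter Topology

lemma norm_real_mul_I_mul (s : ℝ) (v : ℂ) : ‖s * I * v‖ = |s| * ‖v‖ := by
  simp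

lemma norm_add_real_mul_I_mul_sq (s : ℝ) (v : ℂ) :
    ‖v + s * I * v‖ ^ 2 = (1 + s ^ 2) * ‖v‖ ^ 2 := by
  rw [show v + s * I * v = (1 + s * I) * v by ring, norm_mul, mul_pow, Complex.sq_norm (1 + _)]
  simp [normSq_apply, sq]

lemma exists_lt_lt_sq_lt_sq_add_sq {ρ r d : ℝ} (hρ : ρ < r) (hd : 0 < d) :
    ∃ t, ρ < t ∧ t < r ∧ r ^ 2 < d ^ 2 + t ^ 2 := by
  have hlim : Tendsto (fun t : ℝ => d ^ 2 + t ^ 2) (𝓝[<] r) (𝓝 (d ^ 2 + r ^ 2)) :=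
    (Continuous.tendsto (by fun_prop) r).mono_left nhdsWithin_le_nhds
  obtain ⟨t, ⟨hρt, htr⟩, hsq⟩ := (Eventually.and (Ioo_mem_nhdsLT hρ)
    (hlim.eventually (eventually_gt_nhds (by nlinarith : r ^ 2 < d ^ 2 + r ^ 2)))).exists
  exact ⟨t, hρt, htr, hsq⟩

theorem eq_of_ball_diff_closedBall_subset_closedBall {u o c : ℂ} {ρ r : ℝ} (hr : 0 < r)
    (hρ : ρ < r) (h : ball u r \ closedBall o r ⊆ closedBall c ρ) : u = o := by
  by_contra hne
  set d := ‖u - o‖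
  have hd : 0 < d := norm_pos_iff.mpr (sub_ne_zero.mpr hne)
  obtain ⟨t, hρt, htr, hsq⟩ := exists_lt_lt_sq_lt_sq_add_sq (max_lt hρ hr) hd
  have ht : 0 < t := (le_max_right ρ 0).trans_lt hρt
  have hs : |t / d| * d = t := by rw [abs_of_pos (div_pos ht hd), div_mul_cancel₀ _ hd.ne']
  have mem : ∀ s : ℝ, |s| = |t / d| → u + s * I * (u - o) ∈ closedBall c ρ := by
    intro s hst
    refine h ⟨?_, ?_⟩
    · rwa [mem_ball, dist_eq, add_sub_cancel_left, norm_real_mul_I_mul, hst, hs]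
    · rw [mem_closedBall, not_le, dist_eq, ← pow_lt_pow_iff_left₀ hr.le (norm_nonneg _) two_ne_zero,
        add_sub_right_comm, norm_add_real_mul_I_mul_sq, ← sq_abs s, hst, add_mul, one_mul,
        ← mul_pow, hs]
      linarith
  have hpq : dist (u + (t / d : ℝ) * I * (u - o)) (u + (-(t / d) : ℝ) * I * (u - o)) = 2 * t := by
    rw [dist_eq, show u + (t / d : ℝ) * I * (u - o) - (u + (-(t / d) : ℝ) * I * (u - o))
      = (2 * (t / d) : ℝ) * I * (u - o) by push_cast; ring, norm_real_mul_I_mul, abs_mul,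
      abs_two, mul_assoc, hs]
  have h2 := (dist_triangle_right _ _ c).trans (add_le_add
    (mem_closedBall.mp (mem (t / d) rfl)) (mem_closedBall.mp (mem (-(t / d)) (abs_neg _))))
  rw [hpq] at h2
  linarith [le_max_left ρ 0]

theorem stmt18_general (a b oA oC : ℂ) (ρ : ℝ) (hρ1 : ρ < 1) :
    ∀ u : ℂ,
      Metric.ball u 1 ⊆
        ({z ∈ Metric.closedBall oA ρ |
            z ∉ Metric.ball oC 1 ∧ 0 ≤ dot (z - (a + b) / 2) ((a + b) / 2 - oA)} ∪
          Metric.closedBall oC 1) →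
      u = oC := by
  intro u hu
  refine eq_of_ball_diff_closedBall_subset_closedBall (c := oA) one_pos hρ1 ?_
  rintro z ⟨hz, hzU⟩
  rcases hu hz with hzS | hzU'
  · exact hzS.1
  · exact absurd hzU' hzU

/-- simplex condition for the cut in case (a).
Let `a ≠ b` be points, `A` the circular arc of radius `ρ < 1` (center `oA`) from `a` to
`b` spanning an angle less than `π`, and `C` the arc of radius `1` (center `oC`) from
`a` to `b` on the same side of the chord `ab` (both centers strictly on the same side of
the chord midpoint `m = (a+b)/2`, each arc being the minor arc beyond the chord).  Let
`S` be the closed lens-shaped region bounded by `A` and `C`, namely the points of the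
closed disk around `oA` beyond the chord and outside the open unit disk around `oC`, and
let `U` be the closed unit disk bounded by the circle containing `C`.  Then the only
open unit disk contained in `S ∪ U` is the interior of `U`. -/
theorem stmt18 (a b oA oC : ℂ) (ρ : ℝ) (hρ0 : 0 < ρ) (hρ1 : ρ < 1) (hab : a ≠ b)
    (hAa : dist oA a = ρ) (hAb : dist oA b = ρ)
    (hCa : dist oC a = 1) (hCb : dist oC b = 1)
    (hAm : oA ≠ (a + b) / 2) (hCm : oC ≠ (a + b) / 2)
    (hside : 0 < dot ((a + b) / 2 - oA) ((a + b) / 2 - oC)) :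
    ∀ u : ℂ,
      Metric.ball u 1 ⊆
        ({z ∈ Metric.closedBall oA ρ |
            z ∉ Metric.ball oC 1 ∧ 0 ≤ dot (z - (a + b) / 2) ((a + b) / 2 - oA)} ∪
          Metric.closedBall oC 1) →
      u = oC :=
  stmt18_general a b oA oC ρ hρ1
end
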